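/- arXiv:2105.13438 — 2 statements merged into one kernel-verified Lean document; each statement's English description precedes it below -/
import Mathlib

section
/- If G has no isolated vertex and ∂_{2p}(G) = ρ(G)·(δ(G) - 1), then every vertex belonging to any maximum 2-packing of G has degree δ(G). -/
open Finset

variable {V : Type*}

/-- `S` is a 2-packing: closed neighbourhoods of distinct vertices of `S` are disjoint. -/
def IsPacking2 (G : SimpleGraph V) (S : Finset V) : Prop :=
  (S : Set V).Pairwise fun u v =>
    Disjoint (G.neighborSet u ∪ {u}) (G.neighborSet v ∪ {v})

/-- The external neighbourhood of `S`: vertices outside `S` with a neighbour in `S`. -/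
def extN (G : SimpleGraph V) [Fintype V] [DecidableEq V] [DecidableRel G.Adj]
    (S : Finset V) : Finset V :=
  Finset.univ.filter fun v => v ∉ S ∧ ∃ u ∈ S, G.Adj u v

/-- The differential of a set `S`: `|N_e(S)| - |S|`. -/
def diffSet (G : SimpleGraph V) [Fintype V] [DecidableEq V] [DecidableRel G.Adj]
    (S : Finset V) : ℤ :=
  ((extN G S).card : ℤ) - S.card

/-- The 2-packing differential of `G`. -/
noncomputable def pdiff2 (G : SimpleGraph V) [Fintype V] [DecidableEq V]
    [DecidableRel G.Adj] : ℤ :=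
  sSup {d : ℤ | ∃ S : Finset V, IsPacking2 G S ∧ d = diffSet G S}

/-- The packing number of `G`: maximum cardinality of a 2-packing. -/
noncomputable def packNum (G : SimpleGraph V) [Fintype V] : ℕ :=
  sSup {n : ℕ | ∃ S : Finset V, IsPacking2 G S ∧ n = S.card}

/-- `G` has no isolated vertex. -/
def NoIsolated (G : SimpleGraph V) : Prop := ∀ v : V, ∃ u, G.Adj v u

/-- `S` is a dominating set of `G`. -/
def IsDom (G : SimpleGraph V) (S : Finset V) : Prop :=
  ∀ v, v ∉ S → ∃ u ∈ S, G.Adj u v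

/-!
On a 2-packing the closed neighbourhoods are pairwise disjoint, so the external neighbourhood
is the disjoint union of the open neighbourhoods and `diffSet G S = ∑ v ∈ S, (deg v - 1)`.
Each summand is at least `δ - 1`, strictly so at a vertex of degree above `δ`; for a maximum
packing this would push `diffSet G S` above `ρ (δ - 1) = pdiff2 G`.
-/

section Packing

variable {G : SimpleGraph V} {S : Finset V}

lemma IsPacking2.not_adj (hS : IsPacking2 G S) {u v : V} (hu : u ∈ S) (hv : v ∈ S) :
    ¬G.Adj u v := fun hadj =>
  (hS hu hv (G.ne_of_adj hadj)).ne_of_mem (Or.inl hadj) (Or.inr rfl) rfl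

variable [Fintype V] [DecidableRel G.Adj]

lemma IsPacking2.pairwiseDisjoint_neighborFinset (hS : IsPacking2 G S) :
    (S : Set V).PairwiseDisjoint fun v => G.neighborFinset v := by
  intro u hu v hv huv
  refine Finset.disjoint_left.mpr fun w hwu hwv => ?_
  rw [SimpleGraph.mem_neighborFinset] at hwu hwv
  exact (hS hu hv huv).ne_of_mem (Or.inl hwu) (Or.inl hwv) rfl

variable [DecidableEq V]

lemma IsPacking2.extN_eq_biUnion (hS : IsPacking2 G S) :
    extN G S = S.biUnion fun v => G.neighborFinset v := by
  ext w
  simp only [extN, mem_filter, mem_univ, true_and, mem_biUnion,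
    SimpleGraph.mem_neighborFinset]
  exact ⟨fun ⟨_, hw⟩ => hw, fun ⟨u, hu, hadj⟩ => ⟨fun hw => hS.not_adj hu hw hadj, u, hu, hadj⟩⟩

lemma IsPacking2.diffSet_eq_sum (hS : IsPacking2 G S) :
    diffSet G S = ∑ v ∈ S, ((G.degree v : ℤ) - 1) := by
  rw [diffSet, hS.extN_eq_biUnion, card_biUnion hS.pairwiseDisjoint_neighborFinset,
    sum_sub_distrib]
  simp [SimpleGraph.card_neighborFinset_eq_degree]

lemma diffSet_le_pdiff2 (hS : IsPacking2 G S) : diffSet G S ≤ pdiff2 G := by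
  refine le_csSup ⟨Fintype.card V, ?_⟩ ⟨S, hS, rfl⟩
  rintro _ ⟨T, -, rfl⟩
  have : (extN G T).card ≤ Fintype.card V := card_le_univ _
  rw [diffSet]
  omega

end Packing

theorem stmt4_general {V : Type*} [Fintype V] [DecidableEq V] (G : SimpleGraph V)
    [DecidableRel G.Adj]
    (heq : pdiff2 G = (packNum G : ℤ) * ((G.minDegree : ℤ) - 1)) :
    ∀ S : Finset V, IsPacking2 G S → S.card = packNum G →
      ∀ v ∈ S, G.degree v = G.minDegree := by
  intro S hS hcard v hv
  by_contra hne
  have hlt : G.minDegree < G.degree v := (G.minDegree_le_degree v).lt_of_ne' hne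
  have hsum_lt : ∑ _u ∈ S, ((G.minDegree : ℤ) - 1) < ∑ u ∈ S, ((G.degree u : ℤ) - 1) := by
    refine sum_lt_sum (fun u _ => ?_) ⟨v, hv, by omega⟩
    have := G.minDegree_le_degree u
    omega
  rw [sum_const, nsmul_eq_mul, hcard, ← heq, ← hS.diffSet_eq_sum] at hsum_lt
  exact (diffSet_le_pdiff2 hS).not_gt hsum_lt

theorem stmt4 {V : Type*} [Fintype V] [DecidableEq V] (G : SimpleGraph V)
    [DecidableRel G.Adj] (h : NoIsolated G)
    (heq : pdiff2 G = (packNum G : ℤ) * ((G.minDegree : ℤ) - 1)) :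
    ∀ S : Finset V, IsPacking2 G S → S.card = packNum G →
      ∀ v ∈ S, G.degree v = G.minDegree :=
  stmt4_general G heq
end

section
/- For any efficient closed domination graph G with minimum degree δ(G) ≥ 1, the packing number satisfies ρ(G) ≥ ⌈(n(G)·(δ(G)+1) - 2m(G))/(δ(G)+1)⌉. -/
open Finset

variable {V : Type*}

/-!
Let `S` be an efficient closed dominating set. Every vertex outside `S` has a neighbour in `S`,
so `n - |S| ≤ ∑_{u ∈ S} deg u`; every vertex outside `S` has degree at least `δ`, so
`(n - |S|) δ ≤ ∑_{v ∉ S} deg v`. Adding gives `(n - |S|)(δ + 1) ≤ 2m`, i.e.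
`|S| ≥ (n(δ + 1) - 2m)/(δ + 1)`, and `S` is a 2-packing, so `ρ(G) ≥ |S|`.
-/

section

variable [Fintype V] {G : SimpleGraph V} {S : Finset V}

theorem IsPacking2.card_le_packNum (hS : IsPacking2 G S) : S.card ≤ packNum G := by
  refine le_csSup ⟨Fintype.card V, ?_⟩ ⟨S, hS, rfl⟩
  rintro _ ⟨T, -, rfl⟩
  exact T.card_le_univ

variable [DecidableEq V] [DecidableRel G.Adj]

theorem IsDom.card_compl_le_sum_degree (hS : IsDom G S) :
    Sᶜ.card ≤ ∑ u ∈ S, G.degree u := by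
  have hcover : Sᶜ ⊆ S.biUnion (G.neighborFinset ·) := fun v hv => by
    obtain ⟨u, hu, huv⟩ := hS v (mem_compl.mp hv)
    exact mem_biUnion.mpr ⟨u, hu, (G.mem_neighborFinset u v).mpr huv⟩
  exact (card_le_card hcover).trans card_biUnion_le

theorem IsDom.card_compl_mul_le_two_mul_card_edgeFinset (hS : IsDom G S) :
    Sᶜ.card * (G.minDegree + 1) ≤ 2 * G.edgeFinset.card := by
  have hmin : Sᶜ.card * G.minDegree ≤ ∑ v ∈ Sᶜ, G.degree v := by
    simpa using card_nsmul_le_sum Sᶜ (G.degree ·) G.minDegree fun v _ => G.minDegree_le_degree v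
  calc Sᶜ.card * (G.minDegree + 1) = Sᶜ.card * G.minDegree + Sᶜ.card := by ring
    _ ≤ ∑ v ∈ Sᶜ, G.degree v + ∑ u ∈ S, G.degree u :=
      add_le_add hmin hS.card_compl_le_sum_degree
    _ = 2 * G.edgeFinset.card := by
      rw [sum_compl_add_sum, G.sum_degrees_eq_twice_card_edges]

theorem IsDom.ceil_le_card (hS : IsDom G S) :
    ⌈(((Fintype.card V : ℤ) * ((G.minDegree : ℤ) + 1) - 2 * G.edgeFinset.card : ℤ) : ℚ)
        / ((G.minDegree : ℚ) + 1)⌉ ≤ S.card := by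
  have hkey : ((Sᶜ.card * (G.minDegree + 1) : ℕ) : ℚ) ≤ ((2 * G.edgeFinset.card : ℕ) : ℚ) :=
    Nat.cast_le.mpr hS.card_compl_mul_le_two_mul_card_edgeFinset
  have hcard : ((Sᶜ.card : ℕ) : ℚ) = Fintype.card V - S.card := by
    rw [card_compl, Nat.cast_sub S.card_le_univ]
  rw [Int.ceil_le, div_le_iff₀ (by positivity)]
  push_cast at hkey ⊢
  rw [hcard] at hkey
  linarith

end

theorem stmt10_general {V : Type*} [Fintype V] [DecidableEq V] (G : SimpleGraph V)
    [DecidableRel G.Adj]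
    (heff : ∃ S : Finset V, IsPacking2 G S ∧ IsDom G S) :
    (⌈(((Fintype.card V : ℤ) * ((G.minDegree : ℤ) + 1)
        - 2 * G.edgeFinset.card : ℤ) : ℚ) / ((G.minDegree : ℚ) + 1)⌉ : ℤ)
      ≤ (packNum G : ℤ) := by
  obtain ⟨S, hpack, hdom⟩ := heff
  exact hdom.ceil_le_card.trans (Int.ofNat_le.mpr hpack.card_le_packNum)

theorem stmt10 {V : Type*} [Fintype V] [DecidableEq V] (G : SimpleGraph V)
    [DecidableRel G.Adj] (hδ : 1 ≤ G.minDegree)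
    (heff : ∃ S : Finset V, IsPacking2 G S ∧ IsDom G S) :
    (⌈(((Fintype.card V : ℤ) * ((G.minDegree : ℤ) + 1)
        - 2 * G.edgeFinset.card : ℤ) : ℚ) / ((G.minDegree : ℚ) + 1)⌉ : ℤ)
      ≤ (packNum G : ℤ) :=
  stmt10_general G heff
end
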